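/- arXiv:2002.04876 — 3 statements merged into one kernel-verified Lean document; each statement's English description precedes it below -/
import Mathlib

section
/- For φ ≥ 0 and v ≥ 0, the polynomial Q(φ, v) = 2v³ + (18φ - 4sin(2φ))v² + 8cos²(φ)v + 6(3φ - 2sin(2φ) + 2φcos(2φ)) is non-negative, with equality only when φ = 0 and v = 0. -/
/-! Every coefficient of `Q(φ, ·)` is non-negative for `φ ≥ 0`, and the constant one is positive
for `φ > 0`. Writing `cos (2φ) = 2 cos² φ - 1`, the constant coefficient is
`6 (φ (1 + 4 cos² φ) - 2 sin (2φ))`, and `2 sin (2φ) = 4 sin φ cos φ ≤ |sin φ| (1 + 4 cos² φ)`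
by AM-GM, while `|sin φ| < φ`. -/

open Real

theorem Real.two_mul_sin_two_mul_lt {x : ℝ} (hx : 0 < x) :
    2 * sin (2 * x) < x * (1 + 4 * cos x ^ 2) := by
  have hsin : |sin x| < x := by simpa [abs_of_pos hx] using abs_sin_lt_abs hx.ne'
  calc 2 * sin (2 * x) = 4 * (sin x * cos x) := by rw [sin_two_mul]; ring
    _ ≤ 4 * (|sin x| * |cos x|) := by rw [← abs_mul]; gcongr; exact le_abs_self _
    _ ≤ |sin x| * (1 + 4 * cos x ^ 2) := by
      nlinarith [abs_nonneg (sin x), sq_abs (cos x), sq_nonneg (1 - 2 * |cos x|)]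
    _ < x * (1 + 4 * cos x ^ 2) := by gcongr

theorem three_mul_sub_two_mul_sin_two_mul_add_pos {φ : ℝ} (hφ : 0 < φ) :
    0 < 3 * φ - 2 * sin (2 * φ) + 2 * φ * cos (2 * φ) := by
  have hrewrite : 3 * φ - 2 * sin (2 * φ) + 2 * φ * cos (2 * φ) =
      φ * (1 + 4 * cos φ ^ 2) - 2 * sin (2 * φ) := by
    rw [cos_two_mul]; ring
  linarith [two_mul_sin_two_mul_lt hφ]

theorem stmt_14 (φ v : ℝ) (hφ : 0 ≤ φ) (hv : 0 ≤ v) :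
    0 ≤ 2 * v ^ 3 + (18 * φ - 4 * Real.sin (2 * φ)) * v ^ 2 + 8 * Real.cos φ ^ 2 * v +
        6 * (3 * φ - 2 * Real.sin (2 * φ) + 2 * φ * Real.cos (2 * φ)) ∧
    (2 * v ^ 3 + (18 * φ - 4 * Real.sin (2 * φ)) * v ^ 2 + 8 * Real.cos φ ^ 2 * v +
        6 * (3 * φ - 2 * Real.sin (2 * φ) + 2 * φ * Real.cos (2 * φ)) = 0 ↔
      φ = 0 ∧ v = 0) := by
  have hcubic : 0 ≤ 2 * v ^ 3 := by positivity
  have hquadratic : 0 ≤ (18 * φ - 4 * sin (2 * φ)) * v ^ 2 :=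
    mul_nonneg (by linarith [sin_le (by linarith : 0 ≤ 2 * φ)]) (sq_nonneg v)
  have hlinear : 0 ≤ 8 * cos φ ^ 2 * v := by positivity
  have hconstant : 0 ≤ 6 * (3 * φ - 2 * sin (2 * φ) + 2 * φ * cos (2 * φ)) := by
    obtain rfl | hφ := hφ.eq_or_lt
    · simp
    · linarith [three_mul_sub_two_mul_sin_two_mul_add_pos hφ]
  refine ⟨by linarith, fun hzero => ?_, ?_⟩
  · have hφ0 : φ = 0 := by
      by_contra hne
      linarith [three_mul_sub_two_mul_sin_two_mul_add_pos (hφ.lt_of_ne' hne)]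
    exact ⟨hφ0, pow_eq_zero_iff three_ne_zero |>.1 (by linarith)⟩
  · rintro ⟨rfl, rfl⟩
    simp
end

section
/- The function h(φ) = 3φ - 2sin(2φ) + 2φcos(2φ) satisfies h(φ) > 0 for all φ > 0. -/
/-!
Writing `c = cos φ`, `s = sin φ`, the function equals `φ (1 - 2c)² + 4c (φ - s) = φ (1 + 4c²) - 4sc`.
For `c > 0` the first form is positive because `sin φ < φ`; for `c ≤ 0` and `s ≥ 0` the second form
is at least `φ`; and `s < 0` forces `φ > π > 2`, where the crude bound `h(φ) ≥ 3φ - 2 - 2φ` suffices.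
-/

open Real

lemma three_mul_sub_two_mul_sin_two_mul_add_two_mul_cos_two_mul (x : ℝ) :
    3 * x - 2 * sin (2 * x) + 2 * x * cos (2 * x) =
      x * (1 - 2 * cos x) ^ 2 + 4 * cos x * (x - sin x) := by
  rw [sin_two_mul, cos_two_mul]
  ring

theorem stmt_15 (φ : ℝ) (hφ : 0 < φ) :
    0 < 3 * φ - 2 * Real.sin (2 * φ) + 2 * φ * Real.cos (2 * φ) := by
  rcases lt_or_ge 2 φ with hlarge | hsmall
  · nlinarith [sin_le_one (2 * φ), neg_one_le_cos (2 * φ)]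
  have hsin : 0 ≤ sin φ := sin_nonneg_of_nonneg_of_le_pi hφ.le (by linarith [pi_gt_three])
  rw [three_mul_sub_two_mul_sin_two_mul_add_two_mul_cos_two_mul]
  rcases lt_or_ge 0 (cos φ) with hcos | hcos
  · have hsin_lt : 0 < φ - sin φ := sub_pos.2 (sin_lt hφ)
    positivity
  · nlinarith [mul_nonneg hsin (neg_nonneg.2 hcos), mul_nonneg hφ.le (sq_nonneg (cos φ))]
end

section
/- Let φ be a C⁴ solution of the d = 5 biharmonic ODE on [s₀, s₁], set ξ = φ'' - 3φ, and suppose φ(s₀), φ'(s₀), ξ(s₀), ξ'(s₀) are all non-negative. Then φ(s), φ'(s), ξ(s), ξ'(s) are all non-negative for s ∈ [s₀, s₁]; moreover if one of them is positive at s₀, then all four are strictly positive on (s₀, s₁]. -/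
open Real

/-- The `d = 5` autonomous biharmonic ODE. -/
def SolvesBiharmODE5 (φ : ℝ → ℝ) (S : Set ℝ) : Prop :=
  ∀ s ∈ S, iteratedDeriv 4 φ s =
    (4 * cos (2 * φ s) + 9) * iteratedDeriv 2 φ s - 12 * sin (2 * φ s)
      + (6 * iteratedDeriv 2 φ s - 4 * sin (2 * φ s)) * (deriv φ s) ^ 2
      + (4 * cos (2 * φ s) + 10) * deriv φ s
      + 2 * (deriv φ s) ^ 3
      - 2 * iteratedDeriv 3 φ s

/-!
In the coordinates `(φ, v, ξ, η) = (φ, φ', ξ, ξ')` the ODE is the first-order system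
`φ' = v`, `v' = 3φ + ξ`, `ξ' = η`, `η' = cξ - 2η + Q(φ, v)` with `c = 6v² + 4 cos 2φ + 6 ≥ 2`.
Its vector field is quasi-positive: on the face `xᵢ = 0` of the closed orthant its `i`-th
component is non-negative, for `η` because `Q(φ, v) ≥ 2v³` there. This comes down to
`4 sin y ≤ y (3 + 2 cos y)` for `y ≥ 0`, which follows from the Taylor bounds of degree 9 and 10
on `[0, 5]`. A locally Lipschitz quasi-positive field keeps solutions in the orthant: compare
them with the barrier `-ε e^{(L+1)(t-a)}`, `L` a Lipschitz constant near the trajectory.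

Strict positivity propagates along the chain of derivatives: whichever coordinate starts
positive, `v` becomes positive at once, hence so does `φ`, and then
`(e^{2t} η)' = e^{2t} (cξ + Q) ≥ 2 e^{2t} v³ > 0` makes `η`, and with it `ξ`, positive.
-/

open Set Filter Topology
open scoped NNReal

theorem monotoneOn_Icc_of_hasDerivAt_nonneg {f f' : ℝ → ℝ} {a b : ℝ}
    (hf : ∀ x ∈ Icc a b, HasDerivAt f (f' x) x) (hf' : ∀ x ∈ Ioo a b, 0 ≤ f' x) :
    MonotoneOn f (Icc a b) :=
  monotoneOn_of_hasDerivWithinAt_nonneg (convex_Icc a b)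
    (fun x hx ↦ (hf x hx).continuousAt.continuousWithinAt)
    (fun x hx ↦ (hf x (interior_subset hx)).hasDerivWithinAt)
    (fun x hx ↦ hf' x (by rwa [interior_Icc] at hx))

theorem pos_of_hasDerivAt_nonneg {f f' : ℝ → ℝ} {a b : ℝ}
    (hf : ∀ x ∈ Icc a b, HasDerivAt f (f' x) x) (ha : 0 < f a) (hf' : ∀ x ∈ Ioo a b, 0 ≤ f' x) :
    ∀ x ∈ Icc a b, 0 < f x := fun _ hx ↦
  ha.trans_le <|
    monotoneOn_Icc_of_hasDerivAt_nonneg hf hf' (left_mem_Icc.2 (hx.1.trans hx.2)) hx hx.1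

theorem pos_of_hasDerivAt_pos {f f' : ℝ → ℝ} {a b : ℝ}
    (hf : ∀ x ∈ Icc a b, HasDerivAt f (f' x) x) (ha : 0 ≤ f a) (hf' : ∀ x ∈ Ioo a b, 0 < f' x) :
    ∀ x ∈ Ioc a b, 0 < f x := fun _ hx ↦
  ha.trans_lt <| strictMonoOn_of_hasDerivWithinAt_pos (convex_Icc a b)
    (fun y hy ↦ (hf y hy).continuousAt.continuousWithinAt)
    (fun y hy ↦ (hf y (interior_subset hy)).hasDerivWithinAt)
    (fun y hy ↦ hf' y (by rwa [interior_Icc] at hy))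
    (left_mem_Icc.2 (hx.1.le.trans hx.2)) (Ioc_subset_Icc_self hx) hx.1

theorem eventually_pos_of_hasDerivWithinAt {g : ℝ → ℝ} {g' x : ℝ}
    (hg : HasDerivWithinAt g g' (Ioi x) x) (h0 : g x = 0) (h' : 0 < g') :
    ∀ᶠ t in 𝓝[>] x, 0 < g t := by
  have hslope := (hasDerivWithinAt_iff_tendsto_slope' (lt_irrefl x)).1 hg (Ioi_mem_nhds h')
  filter_upwards [hslope, self_mem_nhdsWithin] with t ht hxt
  rw [mem_preimage, slope_def_field, h0, sub_zero] at ht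
  exact (div_pos_iff_of_pos_right (sub_pos.2 hxt)).1 ht

namespace Real

noncomputable def sinTaylor (n : ℕ) (x : ℝ) : ℝ :=
  ∑ k ∈ Finset.range n, (-1) ^ k * x ^ (2 * k + 1) / (2 * k + 1).factorial

noncomputable def cosTaylor (n : ℕ) (x : ℝ) : ℝ :=
  ∑ k ∈ Finset.range n, (-1) ^ k * x ^ (2 * k) / (2 * k).factorial

theorem hasDerivAt_sinTaylor (n : ℕ) (x : ℝ) : HasDerivAt (sinTaylor n) (cosTaylor n x) x := by
  induction n with
  | zero =>
    have h0 : sinTaylor 0 = fun _ ↦ 0 := by funext; simp [sinTaylor]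
    simpa [h0, cosTaylor] using hasDerivAt_const x (0 : ℝ)
  | succ n ih =>
    have hsplit : sinTaylor (n + 1) =
        fun y ↦ sinTaylor n y + (-1) ^ n * y ^ (2 * n + 1) / (2 * n + 1).factorial := by
      funext y; simp [sinTaylor, Finset.sum_range_succ]
    rw [hsplit]
    refine (ih.add (((hasDerivAt_pow _ x).const_mul _).div_const _)).congr_deriv ?_
    simp only [cosTaylor, Finset.sum_range_succ, Nat.factorial_succ, Nat.add_sub_cancel]
    push_cast
    field_simp

theorem hasDerivAt_cosTaylor_succ (n : ℕ) (x : ℝ) :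
    HasDerivAt (cosTaylor (n + 1)) (-sinTaylor n x) x := by
  induction n with
  | zero =>
    have h1 : cosTaylor 1 = fun _ ↦ 1 := by funext; simp [cosTaylor]
    simpa [h1, sinTaylor] using hasDerivAt_const x (1 : ℝ)
  | succ n ih =>
    have hsplit : cosTaylor (n + 2) = fun y ↦
        cosTaylor (n + 1) y + (-1) ^ (n + 1) * y ^ (2 * n + 1 + 1) / (2 * n + 1 + 1).factorial := by
      funext y; simp [cosTaylor, Finset.sum_range_succ (n := n + 1)]; ring_nf
    rw [hsplit]
    refine (ih.add (((hasDerivAt_pow _ x).const_mul _).div_const _)).congr_deriv ?_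
    simp only [sinTaylor, Finset.sum_range_succ, Nat.factorial_succ, Nat.add_sub_cancel]
    push_cast
    field_simp
    ring

theorem sinTaylor_cosTaylor_alternating_bounds (n : ℕ) {x : ℝ} (hx : 0 ≤ x) :
    0 ≤ (-1) ^ n * (sinTaylor (n + 1) x - sin x) ∧
      0 ≤ (-1) ^ n * (cosTaylor (n + 1) x - cos x) := by
  induction n generalizing x with
  | zero => simpa [sinTaylor, cosTaylor] using ⟨sin_le hx, cos_le_one x⟩
  | succ n ih =>
    have hcos : ∀ {y : ℝ}, 0 ≤ y → 0 ≤ (-1) ^ (n + 1) * (cosTaylor (n + 2) y - cos y) := by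
      intro y hy
      have := monotoneOn_Icc_of_hasDerivAt_nonneg
        (fun z _ ↦ (((hasDerivAt_cosTaylor_succ (n + 1) z).sub (hasDerivAt_cos z)).const_mul
          ((-1 : ℝ) ^ (n + 1))))
        (fun z hz ↦ by have := (ih hz.1.le).1; rw [pow_succ]; linarith)
        (left_mem_Icc.2 hy) (right_mem_Icc.2 hy) hy
      simpa [cosTaylor, Finset.sum_range_succ'] using this
    refine ⟨?_, hcos hx⟩
    have := monotoneOn_Icc_of_hasDerivAt_nonneg
      (fun z _ ↦ (((hasDerivAt_sinTaylor (n + 2) z).sub (hasDerivAt_sin z)).const_mul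
        ((-1 : ℝ) ^ (n + 1)))) (fun z hz ↦ hcos hz.1.le)
      (left_mem_Icc.2 hx) (right_mem_Icc.2 hx) hx
    simpa [sinTaylor, Finset.sum_range_succ'] using this

theorem four_mul_sin_le {y : ℝ} (hy : 0 ≤ y) : 4 * sin y ≤ y * (3 + 2 * cos y) := by
  rcases le_or_gt y 5 with hy5 | hy5
  · have hsin := (sinTaylor_cosTaylor_alternating_bounds 4 hy).1
    have hcos := (sinTaylor_cosTaylor_alternating_bounds 5 hy).2
    simp only [sinTaylor, cosTaylor, Finset.sum_range_succ, Finset.sum_range_zero] at hsin hcos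
    norm_num [Nat.factorial] at hsin hcos
    -- `y (3 + 2 T₁₀(y)) - 4 T₉(y) = y q(y²)`, `T₉` and `T₁₀` the Taylor polynomials above
    have hq : ∀ u : ℝ, 0 ≤ u → u ≤ 25 →
        0 ≤ 1 - u / 3 + u ^ 2 / 20 - u ^ 3 / 504 + u ^ 4 / 25920 - u ^ 5 / 1814400 := by
      intro u h0 h25
      have h := sub_nonneg.2 h25
      nlinarith [mul_nonneg h0 (sq_nonneg (u - 4)),
        mul_nonneg (mul_nonneg h0 h0) (sq_nonneg (u - 4)), mul_nonneg h (sq_nonneg (u - 4)), mul_nonneg (mul_nonneg h0 h) (sq_nonneg (u - 4)),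
        mul_nonneg (mul_nonneg h h) (sq_nonneg (u - 4))]
    linarith [mul_le_mul_of_nonneg_left hcos hy,
      mul_nonneg hy (hq (y ^ 2) (sq_nonneg y) (by nlinarith))]
  · nlinarith [sin_le_one y, neg_one_le_cos y]

end Real

section QuasiPositive

variable {ι : Type*}

theorem nonneg_of_hasDerivWithinAt_of_boundary [Finite ι] {u u' : ℝ → ι → ℝ} {a b L : ℝ}
    (hu : ContinuousOn u (Icc a b)) (hu' : ∀ t ∈ Ico a b, HasDerivWithinAt u (u' t) (Ici t) t)
    (ha : 0 ≤ u a)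
    (hL : ∀ t ∈ Ico a b, ∀ δ > 0, (∀ j, -δ ≤ u t j) → ∀ i, u t i = -δ → -(L * δ) ≤ u' t i) :
    ∀ t ∈ Icc a b, 0 ≤ u t := by
  have hbarrier : ∀ ε > 0, ∀ t ∈ Icc a b, ∀ i, -(ε * exp ((L + 1) * (t - a))) ≤ u t i := by
    intro ε hε
    set B : ℝ → ℝ := fun t ↦ ε * exp ((L + 1) * (t - a)) with hB
    have hBpos : ∀ t, 0 < B t := fun t ↦ by positivity
    have hB' : ∀ t, HasDerivAt B ((L + 1) * B t) t := fun t ↦ by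
      refine ((((hasDerivAt_id t).sub_const a).const_mul (L + 1)).exp.const_mul ε).congr_deriv ?_
      simp only [hB, id]; ring
    let s : Set ℝ := {t | (fun _ ↦ -B t) ≤ u t}
    have hs : IsClosed (s ∩ Icc a b) := by
      rw [inter_comm]
      exact ((continuous_pi fun _ ↦ (continuous_const.mul (by fun_prop)).neg).continuousOn.prodMk
        hu).preimage_isClosed_of_isClosed isClosed_Icc OrderClosedTopology.isClosed_le'
    refine fun t ht ↦ hs.Icc_subset_of_forall_mem_nhdsWithin (fun i ↦ ?_) (fun x ⟨hxs, hx⟩ ↦ ?_) ht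
    · show -B a ≤ u a i
      linarith [show (0 : ℝ) ≤ u a i from ha i, show B a = ε by simp [hB]]
    · refine eventually_all.2 fun i ↦ ?_
      have hg : HasDerivWithinAt (fun t ↦ u t i + B t) (u' x i + (L + 1) * B x) (Ioi x) x :=
        ((hasDerivWithinAt_pi.1 (hu' x hx) i).add (hB' x).hasDerivWithinAt).Ioi_of_Ici
      suffices ∀ᶠ t in 𝓝[>] x, 0 < u t i + B t from this.mono fun t ht ↦ by linarith
      rcases (hxs i).lt_or_eq with hlt | heq
      · exact hg.continuousWithinAt.eventually (lt_mem_nhds (by linarith))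
      · refine eventually_pos_of_hasDerivWithinAt hg (by linarith) ?_
        linarith [hL x hx (B x) (hBpos x) hxs i heq.symm, hBpos x]
  intro t ht i
  show 0 ≤ u t i
  refine le_of_forall_pos_lt_add fun ε hε ↦ ?_
  have hE : 0 < exp ((L + 1) * (t - a)) := exp_pos _
  have := hbarrier (ε / 2 / exp ((L + 1) * (t - a))) (by positivity) t ht i
  rw [div_mul_cancel₀ _ hE.ne'] at this
  linarith

def QuasiPositive (F : (ι → ℝ) → ι → ℝ) : Prop :=
  ∀ x, 0 ≤ x → ∀ i, x i = 0 → 0 ≤ F x i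

theorem QuasiPositive.neg_mul_le_apply [Fintype ι] {F : (ι → ℝ) → ι → ℝ} (hF : QuasiPositive F)
    {s : Set (ι → ℝ)} {K : ℝ≥0} (hK : LipschitzOnWith K F s) {x : ι → ℝ} (hx : x ∈ s)
    (hx' : x ⊔ 0 ∈ s) {δ : ℝ} (hδ : 0 ≤ δ) (hxδ : ∀ j, -δ ≤ x j) {i : ι} (hi : x i = -δ) :
    -(K * δ) ≤ F x i := by
  have hpos : 0 ≤ F (x ⊔ 0) i := hF _ le_sup_right i (by simp [hi, hδ])
  have hnear : ‖x - x ⊔ 0‖ ≤ δ := (pi_norm_le_iff_of_nonneg hδ).2 fun j ↦ by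
    simp only [Pi.sub_apply, Pi.sup_apply, Pi.zero_apply, Real.norm_eq_abs]
    rw [abs_le]; constructor <;> cases max_cases (x j) 0 <;> linarith [hxδ j]
  have hlip : ‖F x - F (x ⊔ 0)‖ ≤ K * δ := by
    rw [← dist_eq_norm] at hnear ⊢
    exact (hK.dist_le_mul x hx _ hx').trans (mul_le_mul_of_nonneg_left hnear K.2)
  have := (norm_le_pi_norm (F x - F (x ⊔ 0)) i).trans hlip
  rw [Pi.sub_apply, Real.norm_eq_abs, abs_le] at this
  linarith [this.1]

theorem QuasiPositive.nonneg_of_hasDerivWithinAt [Fintype ι] {F : (ι → ℝ) → ι → ℝ}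
    (hF : QuasiPositive F) (hlip : LocallyLipschitz F) {u : ℝ → ι → ℝ} {a b : ℝ}
    (hu : ContinuousOn u (Icc a b)) (hu' : ∀ t ∈ Ico a b, HasDerivWithinAt u (F (u t)) (Ici t) t)
    (ha : 0 ≤ u a) : ∀ t ∈ Icc a b, 0 ≤ u t := by
  obtain ⟨M, hM⟩ := isCompact_Icc.exists_bound_of_continuousOn hu
  obtain ⟨K, hK⟩ := (hlip.locallyLipschitzOn (s := Metric.closedBall 0 M))
    |>.exists_lipschitzOnWith_of_compact (isCompact_closedBall 0 M)
  refine nonneg_of_hasDerivWithinAt_of_boundary (L := K) hu hu' ha fun t ht δ hδ hxδ i hi ↦ ?_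
  have hball : u t ∈ Metric.closedBall 0 M :=
    mem_closedBall_zero_iff.2 (hM t (Ico_subset_Icc_self ht))
  refine hF.neg_mul_le_apply hK hball ?_ hδ.le hxδ hi
  rw [mem_closedBall_zero_iff] at hball ⊢
  refine (pi_norm_le_iff_of_nonneg ((norm_nonneg _).trans hball)).2 fun j ↦ ?_
  refine le_trans ?_ ((norm_le_pi_norm (u t) j).trans hball)
  simp only [Pi.sup_apply, Pi.zero_apply, Real.norm_eq_abs]
  exact abs_max_le_max_abs_abs.trans (by simp)

end QuasiPositive

namespace BiharmODE5

noncomputable def Q (φ v : ℝ) : ℝ :=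
  2 * v ^ 3 + (18 * φ - 4 * sin (2 * φ)) * v ^ 2 + 8 * cos φ ^ 2 * v
    + 6 * (3 * φ - 2 * sin (2 * φ) + 2 * φ * cos (2 * φ))

noncomputable def forcing (x : Fin 4 → ℝ) : ℝ :=
  (6 * x 1 ^ 2 + 4 * cos (2 * x 0) + 6) * x 2 + Q (x 0) (x 1)

noncomputable def vectorField (x : Fin 4 → ℝ) : Fin 4 → ℝ :=
  ![x 1, 3 * x 0 + x 2, x 3, forcing x - 2 * x 3]

theorem two_mul_pow_three_le_Q {φ v : ℝ} (hφ : 0 ≤ φ) (hv : 0 ≤ v) : 2 * v ^ 3 ≤ Q φ v := by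
  have h2φ : 0 ≤ 2 * φ := by linarith
  have hsin := sin_le h2φ
  have hg := four_mul_sin_le h2φ
  unfold Q
  nlinarith [mul_nonneg hv (sq_nonneg (cos φ)),
    mul_nonneg (sq_nonneg v) (by linarith : 0 ≤ 18 * φ - 4 * sin (2 * φ))]

theorem two_mul_pow_three_le_forcing {x : Fin 4 → ℝ} (hx : 0 ≤ x) : 2 * x 1 ^ 3 ≤ forcing x := by
  have hc : 0 ≤ 6 * x 1 ^ 2 + 4 * cos (2 * x 0) + 6 := by
    nlinarith [sq_nonneg (x 1), neg_one_le_cos (2 * x 0)]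
  have := two_mul_pow_three_le_Q (hx 0) (hx 1)
  unfold forcing
  nlinarith [mul_nonneg hc (hx 2)]

theorem quasiPositive_vectorField : QuasiPositive vectorField := by
  intro x hx i hi
  have h : ∀ j, 0 ≤ x j := hx
  fin_cases i <;>
    simp only [vectorField, Fin.zero_eta, Fin.mk_one, Fin.reduceFinMk, Matrix.cons_val] at hi ⊢
  · exact h 1
  · linarith [h 0, h 2]
  · exact h 3
  · rw [hi]
    linarith [two_mul_pow_three_le_forcing hx, pow_nonneg (h 1) 3]

theorem locallyLipschitz_vectorField : LocallyLipschitz vectorField := by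
  refine ContDiff.locallyLipschitz (𝕂 := ℝ) (contDiff_pi.2 fun i ↦ ?_)
  fin_cases i <;>
    simp only [vectorField, forcing, Q, Fin.zero_eta, Fin.mk_one, Fin.reduceFinMk,
      Matrix.cons_val] <;>
    fun_prop

theorem hasDerivAt_coords {u : ℝ → Fin 4 → ℝ} {t : ℝ} (hu : HasDerivAt u (vectorField (u t)) t) :
    HasDerivAt (fun s ↦ u s 0) (u t 1) t ∧ HasDerivAt (fun s ↦ u s 1) (3 * u t 0 + u t 2) t ∧
      HasDerivAt (fun s ↦ u s 2) (u t 3) t ∧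
      HasDerivAt (fun s ↦ exp (2 * s) * u s 3) (exp (2 * t) * forcing (u t)) t := by
  have h : ∀ i, HasDerivAt (fun s ↦ u s i) (vectorField (u t) i) t := hasDerivAt_pi.1 hu
  refine ⟨h 0, h 1, h 2, ?_⟩
  exact (((hasDerivAt_id t).const_mul 2).exp.mul (h 3)).congr_deriv
    (by simp only [vectorField, Matrix.cons_val, id]; ring)

theorem hasDerivAt_state {φ ξ : ℝ → ℝ} {S : Set ℝ} (hφ : ContDiff ℝ 4 φ)
    (hODE : SolvesBiharmODE5 φ S) (hξ : ξ = fun s ↦ iteratedDeriv 2 φ s - 3 * φ s) :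
    ∀ s ∈ S, HasDerivAt (fun s ↦ ![φ s, deriv φ s, ξ s, deriv ξ s])
      (vectorField ![φ s, deriv φ s, ξ s, deriv ξ s]) s := by
  have hd : ∀ k < 4, ∀ s, HasDerivAt (iteratedDeriv k φ) (iteratedDeriv (k + 1) φ s) s := by
    intro k hk s
    rw [iteratedDeriv_succ]
    exact (hφ.differentiable_iteratedDeriv k (by exact_mod_cast hk) s).hasDerivAt
  have h0 := hd 0 (by norm_num)
  have h1 := hd 1 (by norm_num)
  have h2 := hd 2 (by norm_num)
  have h3 := hd 3 (by norm_num)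
  simp only [iteratedDeriv_zero, iteratedDeriv_one, zero_add] at h0 h1 h2 h3
  have hξ' : ∀ s, HasDerivAt ξ (iteratedDeriv 3 φ s - 3 * deriv φ s) s := fun s ↦
    hξ ▸ (h2 s).sub ((h0 s).const_mul 3)
  have hη : deriv ξ = fun s ↦ iteratedDeriv 3 φ s - 3 * deriv φ s := funext fun s ↦ (hξ' s).deriv
  intro s hs
  refine hasDerivAt_pi.2 fun i ↦ ?_
  fin_cases i <;>
    simp only [vectorField, forcing, Fin.zero_eta, Fin.mk_one, Fin.reduceFinMk, Matrix.cons_val]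
  · exact h0 s
  · exact (h1 s).congr_deriv (by rw [hξ]; ring)
  · exact hη ▸ hξ' s
  · rw [hη]
    refine ((h3 s).sub ((h1 s).const_mul 3)).congr_deriv ?_
    rw [hξ, hODE s hs, Q, cos_sq]
    ring

section Positivity

variable {u : ℝ → Fin 4 → ℝ} {a b : ℝ} (hu : ∀ t ∈ Icc a b, HasDerivAt u (vectorField (u t)) t)
  (hnn : ∀ t ∈ Icc a b, 0 ≤ u t)
include hu hnn

theorem velocity_pos {i : Fin 4} (hi : 0 < u a i) : ∀ t ∈ Ioc a b, 0 < u t 1 := by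
  have hp := fun t ht ↦ (hasDerivAt_coords (hu t ht)).1
  have hv := fun t ht ↦ (hasDerivAt_coords (hu t ht)).2.1
  have hξ := fun t ht ↦ (hasDerivAt_coords (hu t ht)).2.2.1
  have hw := fun t ht ↦ (hasDerivAt_coords (hu t ht)).2.2.2
  have h0 : ∀ j, ∀ t ∈ Ioo a b, 0 ≤ u t j := fun j t ht ↦ hnn t (Ioo_subset_Icc_self ht) j
  intro t ht
  have ha : a ∈ Icc a b := left_mem_Icc.2 (ht.1.le.trans ht.2)
  have hv_of : (∀ s ∈ Ioo a b, 0 < 3 * u s 0 + u s 2) → 0 < u t 1 := fun hpos ↦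
    pos_of_hasDerivAt_pos hv (hnn a ha 1) hpos t ht
  fin_cases i <;> simp only [Fin.zero_eta, Fin.mk_one, Fin.reduceFinMk] at hi
  · have hp_pos := pos_of_hasDerivAt_nonneg hp hi fun s hs ↦ h0 1 s hs
    exact hv_of fun s hs ↦ by linarith [hp_pos s (Ioo_subset_Icc_self hs), h0 2 s hs]
  · exact pos_of_hasDerivAt_nonneg hv hi (fun s hs ↦ by linarith [h0 0 s hs, h0 2 s hs]) t
      (Ioc_subset_Icc_self ht)
  · have hξ_pos := pos_of_hasDerivAt_nonneg hξ hi fun s hs ↦ h0 3 s hs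
    exact hv_of fun s hs ↦ by linarith [h0 0 s hs, hξ_pos s (Ioo_subset_Icc_self hs)]
  · have hw_pos := pos_of_hasDerivAt_nonneg hw (mul_pos (exp_pos _) hi) fun s hs ↦
      mul_nonneg (exp_pos _).le (by
        linarith [two_mul_pow_three_le_forcing (hnn s (Ioo_subset_Icc_self hs)),
          pow_nonneg (h0 1 s hs) 3])
    have hξ_pos := pos_of_hasDerivAt_pos hξ (hnn a ha 2) fun s hs ↦
      pos_of_mul_pos_right (hw_pos s (Ioo_subset_Icc_self hs)) (exp_pos _).le
    exact hv_of fun s hs ↦ by linarith [h0 0 s hs, hξ_pos s (Ioo_subset_Ioc_self hs)]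

theorem pos_of_velocity_pos (hv : ∀ t ∈ Ioc a b, 0 < u t 1) : ∀ t ∈ Ioc a b, ∀ j, 0 < u t j := by
  intro t ht
  have ha : a ∈ Icc a b := left_mem_Icc.2 (ht.1.le.trans ht.2)
  have hv' : ∀ s ∈ Ioo a b, 0 < u s 1 := fun s hs ↦ hv s (Ioo_subset_Ioc_self hs)
  have hp_pos := pos_of_hasDerivAt_pos (fun s hs ↦ (hasDerivAt_coords (hu s hs)).1) (hnn a ha 0) hv'
  have hw_pos := pos_of_hasDerivAt_pos (fun s hs ↦ (hasDerivAt_coords (hu s hs)).2.2.2)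
    (mul_nonneg (exp_pos _).le (hnn a ha 3)) fun s hs ↦ mul_pos (exp_pos _)
      ((mul_pos two_pos (pow_pos (hv' s hs) 3)).trans_le
        (two_mul_pow_three_le_forcing (hnn s (Ioo_subset_Icc_self hs))))
  have hη_pos : ∀ s ∈ Ioc a b, 0 < u s 3 := fun s hs ↦
    pos_of_mul_pos_right (hw_pos s hs) (exp_pos _).le
  have hξ_pos := pos_of_hasDerivAt_pos (fun s hs ↦ (hasDerivAt_coords (hu s hs)).2.2.1)
    (hnn a ha 2) fun s hs ↦ hη_pos s (Ioo_subset_Ioc_self hs)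
  intro j
  fin_cases j
  exacts [hp_pos t ht, hv t ht, hξ_pos t ht, hη_pos t ht]

end Positivity

end BiharmODE5

open BiharmODE5

theorem stmt_16_general (s₀ s₁ : ℝ) (φ : ℝ → ℝ) (hφ : ContDiff ℝ 4 φ)
    (hODE : SolvesBiharmODE5 φ (Set.Icc s₀ s₁))
    (ξ : ℝ → ℝ) (hξ : ξ = fun s => iteratedDeriv 2 φ s - 3 * φ s)
    (h1 : 0 ≤ φ s₀) (h2 : 0 ≤ deriv φ s₀) (h3 : 0 ≤ ξ s₀) (h4 : 0 ≤ deriv ξ s₀) :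
    (∀ s ∈ Set.Icc s₀ s₁, 0 ≤ φ s ∧ 0 ≤ deriv φ s ∧ 0 ≤ ξ s ∧ 0 ≤ deriv ξ s) ∧
    ((0 < φ s₀ ∨ 0 < deriv φ s₀ ∨ 0 < ξ s₀ ∨ 0 < deriv ξ s₀) →
      ∀ s ∈ Set.Ioc s₀ s₁, 0 < φ s ∧ 0 < deriv φ s ∧ 0 < ξ s ∧ 0 < deriv ξ s) := by
  set u : ℝ → Fin 4 → ℝ := fun s ↦ ![φ s, deriv φ s, ξ s, deriv ξ s]
  have hu : ∀ s ∈ Icc s₀ s₁, HasDerivAt u (vectorField (u s)) s := hasDerivAt_state hφ hODE hξ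
  have hnn : ∀ s ∈ Icc s₀ s₁, 0 ≤ u s :=
    quasiPositive_vectorField.nonneg_of_hasDerivWithinAt locallyLipschitz_vectorField
      (fun s hs ↦ (hu s hs).continuousAt.continuousWithinAt)
      (fun s hs ↦ (hu s (Ico_subset_Icc_self hs)).hasDerivWithinAt)
      (by intro i; fin_cases i; exacts [h1, h2, h3, h4])
  refine ⟨fun s hs ↦ ?_, fun hpos s hs ↦ ?_⟩
  · have h := hnn s hs
    exact ⟨h 0, h 1, h 2, h 3⟩
  · obtain ⟨i, hi⟩ : ∃ i, 0 < u s₀ i := by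
      rcases hpos with h | h | h | h
      exacts [⟨0, h⟩, ⟨1, h⟩, ⟨2, h⟩, ⟨3, h⟩]
    have h := pos_of_velocity_pos hu hnn (velocity_pos hu hnn hi) s hs
    exact ⟨h 0, h 1, h 2, h 3⟩

theorem stmt_16 (s₀ s₁ : ℝ) (hs : s₀ < s₁) (φ : ℝ → ℝ) (hφ : ContDiff ℝ 4 φ)
    (hODE : SolvesBiharmODE5 φ (Set.Icc s₀ s₁))
    (ξ : ℝ → ℝ) (hξ : ξ = fun s => iteratedDeriv 2 φ s - 3 * φ s)
    (h1 : 0 ≤ φ s₀) (h2 : 0 ≤ deriv φ s₀) (h3 : 0 ≤ ξ s₀) (h4 : 0 ≤ deriv ξ s₀) :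
    (∀ s ∈ Set.Icc s₀ s₁, 0 ≤ φ s ∧ 0 ≤ deriv φ s ∧ 0 ≤ ξ s ∧ 0 ≤ deriv ξ s) ∧
    ((0 < φ s₀ ∨ 0 < deriv φ s₀ ∨ 0 < ξ s₀ ∨ 0 < deriv ξ s₀) →
      ∀ s ∈ Set.Ioc s₀ s₁, 0 < φ s ∧ 0 < deriv φ s ∧ 0 < ξ s ∧ 0 < deriv ξ s) :=
  stmt_16_general s₀ s₁ φ hφ hODE ξ hξ h1 h2 h3 h4
end
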